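/- arXiv:1809.00694 — 5 statements merged into one kernel-verified Lean document; each statement's English description precedes it below -/
import Mathlib

section
/- For every t ∈ (0, 1), the true positive rate of the randomized likelihood-ratio classification rule at level t satisfies P₊({L > q_t}) + r(t) · P₊({L = q_t}) = 1 − H₊(q_t) + q_t · (H₋(q_t) − t). Consequently, parameterizing by x = 1 − t, the ROC curve of the rule is ROC(x) = 1 − H₊(q_{1−x}) + q_{1−x} · (H₋(q_{1−x}) − (1 − x)) for 0 < x < 1. -/
open MeasureTheory Function Set

/-!
Write `F = H₋` for the distribution function of `L` under `P₋`: it is the cdf of the law of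
`L`, a right-continuous monotone function with limits `0` and `1` at `∓∞`. Hence for
`t ∈ (0, 1)` the quantile `q_t` is finite and `F(q_t⁻) ≤ t ≤ F(q_t)`, while the jump
`F(q_t) - F(q_t⁻)` is `P₋(L = q_t)`. Since `L = dP₊/dP₋`, the atom `{L = q_t}` has
`P₊`-mass `q_t · P₋(L = q_t)`, and `r(t)` is chosen so that `r(t) · (F(q_t) - F(q_t⁻)) = F(q_t) - t`
(in the continuous case both sides vanish, as then `F(q_t) = t`).
-/

open Filter Topology ProbabilityTheory

theorem StieltjesFunction.le_apply_sInf_setOf_le (f : StieltjesFunction ℝ) {t : ℝ}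
    (hne : {y | t ≤ f y}.Nonempty) (hbdd : BddBelow {y | t ≤ f y}) :
    t ≤ f (sInf {y | t ≤ f y}) := by
  refine ge_of_tendsto ((f.right_continuous _).mono Ioi_subset_Ici_self) ?_
  filter_upwards [self_mem_nhdsWithin] with y hy
  obtain ⟨s, hs, hsy⟩ := (csInf_lt_iff hbdd hne).mp hy
  exact le_trans hs (f.mono hsy.le)

theorem Monotone.leftLim_sInf_setOf_le {f : ℝ → ℝ} (hf : Monotone f) {t : ℝ}
    (hbdd : BddBelow {y | t ≤ f y}) : leftLim f (sInf {y | t ≤ f y}) ≤ t := by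
  refine _root_.le_of_tendsto (hf.tendsto_leftLim _) ?_
  filter_upwards [self_mem_nhdsWithin] with y hy
  exact (not_le.mp (notMem_of_lt_csInf (s := {y | t ≤ f y}) hy hbdd)).le

theorem ite_div_mul_sub_eq {a b t : ℝ} (ha : a ≤ t) (hb : t ≤ b) :
    (if a < b then (b - t) / (b - a) else 0) * (b - a) = b - t := by
  split_ifs with h
  · field_simp [sub_ne_zero.mpr h.ne']
  · have : a = b := le_antisymm (ha.trans hb) (not_lt.mp h)
    subst this
    linarith

namespace ProbabilityTheory

variable (μ : Measure ℝ) {t : ℝ}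

theorem nonempty_setOf_le_cdf (ht : t < 1) : {y | t ≤ cdf μ y}.Nonempty :=
  ((tendsto_cdf_atTop μ).eventually (eventually_ge_nhds ht)).exists

theorem bddBelow_setOf_le_cdf (ht : 0 < t) : BddBelow {y | t ≤ cdf μ y} := by
  obtain ⟨b, hb⟩ := eventually_atBot.mp ((tendsto_cdf_atBot μ).eventually (eventually_lt_nhds ht))
  refine ⟨b, fun y hy => ?_⟩
  by_contra! hyb
  exact (hb y hyb.le).not_ge hy

theorem le_cdf_sInf_setOf_le_cdf (ht : t ∈ Ioo 0 1) :
    t ≤ cdf μ (sInf {y | t ≤ cdf μ y}) :=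
  (cdf μ).le_apply_sInf_setOf_le (nonempty_setOf_le_cdf μ ht.2) (bddBelow_setOf_le_cdf μ ht.1)

theorem leftLim_cdf_sInf_setOf_le_cdf_le (ht : 0 < t) :
    leftLim (cdf μ) (sInf {y | t ≤ cdf μ y}) ≤ t :=
  (monotone_cdf μ).leftLim_sInf_setOf_le (bddBelow_setOf_le_cdf μ ht)

theorem cdf_sub_leftLim_cdf [IsProbabilityMeasure μ] (x : ℝ) :
    cdf μ x - leftLim (cdf μ) x = μ.real {x} := by
  have h := (cdf μ).measure_singleton x
  rw [measure_cdf] at h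
  rw [measureReal_def, h, ENNReal.toReal_ofReal (sub_nonneg.mpr ((cdf μ).mono.leftLim_le le_rfl))]

end ProbabilityTheory

theorem toReal_measure_setOf_eq_eq_mul {Ω : Type*} [MeasurableSpace Ω] {Pm Pp : Measure Ω}
    {L : Ω → ℝ} (hL : Measurable L)
    (hRN : ∀ s : Set Ω, MeasurableSet s → (Pp s).toReal = ∫ ω in s, L ω ∂Pm) (c : ℝ) :
    (Pp {ω | L ω = c}).toReal = c * (Pm {ω | L ω = c}).toReal := by
  have hs : MeasurableSet {ω | L ω = c} := hL (measurableSet_singleton c)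
  rw [hRN _ hs, setIntegral_congr_fun hs (fun ω (hω : L ω = c) => hω), setIntegral_const,
    smul_eq_mul, mul_comm, measureReal_def]

theorem tpr_and_roc_of_randomized_LR_rule_general
    {Ω : Type*} [MeasurableSpace Ω]
    (Pm Pp : Measure Ω) [IsProbabilityMeasure Pm] [IsProbabilityMeasure Pp]
    (L : Ω → ℝ) (hLmeas : Measurable L)
    (hRN : ∀ s : Set Ω, MeasurableSet s → (Pp s).toReal = ∫ ω in s, L ω ∂Pm)
    (Hm Hp : ℝ → ℝ)
    (hHm : ∀ l, Hm l = (Pm {ω | L ω ≤ l}).toReal)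
    (hHp : ∀ l, Hp l = (Pp {ω | L ω ≤ l}).toReal)
    (q : ℝ → ℝ) (hq : ∀ t, q t = sInf {y : ℝ | t ≤ Hm y})
    (r : ℝ → ℝ)
    (hr : ∀ t, r t = if leftLim Hm (q t) < Hm (q t)
        then (Hm (q t) - t) / (Hm (q t) - leftLim Hm (q t)) else 0)
    (ROC : ℝ → ℝ)
    (hROC : ∀ x ∈ Set.Ioo (0 : ℝ) 1,
        ROC x = 1 - Hp (q (1 - x)) + q (1 - x) * (Hm (q (1 - x)) - (1 - x))) :
    (∀ t ∈ Set.Ioo (0 : ℝ) 1,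
        (Pp {ω | q t < L ω}).toReal + r t * (Pp {ω | L ω = q t}).toReal
          = 1 - Hp (q t) + q t * (Hm (q t) - t)) ∧
    (∀ x ∈ Set.Ioo (0 : ℝ) 1,
        (Pp {ω | q (1 - x) < L ω}).toReal
          + r (1 - x) * (Pp {ω | L ω = q (1 - x)}).toReal = ROC x) := by
  have := Measure.isProbabilityMeasure_map (μ := Pm) hLmeas.aemeasurable
  have hF : Hm = cdf (Pm.map L) := funext fun l => by
    rw [hHm, cdf_eq_real, map_measureReal_apply hLmeas measurableSet_Iic]; rfl
  have tpr : ∀ t ∈ Ioo (0 : ℝ) 1,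
      (Pp {ω | q t < L ω}).toReal + r t * (Pp {ω | L ω = q t}).toReal
        = 1 - Hp (q t) + q t * (Hm (q t) - t) := by
    intro t ht
    have hQ : q t = sInf {y | t ≤ cdf (Pm.map L) y} := by rw [hq, hF]
    have hjump : (Pm {ω | L ω = q t}).toReal = Hm (q t) - leftLim Hm (q t) := by
      rw [hF, cdf_sub_leftLim_cdf, map_measureReal_apply hLmeas (measurableSet_singleton _)]; rfl
    have htail : (Pp {ω | q t < L ω}).toReal = 1 - Hp (q t) := by
      rw [show {ω | q t < L ω} = {ω | L ω ≤ q t}ᶜ by ext; simp, ← measureReal_def,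
        probReal_compl_eq_one_sub (measurableSet_le hLmeas measurable_const), hHp, measureReal_def]
    have hleft : leftLim Hm (q t) ≤ t := hF ▸ hQ ▸ leftLim_cdf_sInf_setOf_le_cdf_le _ ht.1
    have hright : t ≤ Hm (q t) := hF ▸ hQ ▸ le_cdf_sInf_setOf_le_cdf _ ht
    rw [htail, toReal_measure_setOf_eq_eq_mul hLmeas hRN, hjump, hr, mul_left_comm,
      ite_div_mul_sub_eq hleft hright]
  refine ⟨tpr, fun x hx => ?_⟩
  rw [tpr (1 - x) ⟨by linarith [hx.2], by linarith [hx.1]⟩, hROC x hx]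

/-- For every `t ∈ (0,1)`, the true positive rate of the randomized
likelihood-ratio classification rule at level `t` satisfies
`P₊(L > q_t) + r(t) · P₊(L = q_t) = 1 - H₊(q_t) + q_t (H₋(q_t) - t)`.
Consequently, parameterizing by `x = 1 - t`, the ROC curve of the rule is
`ROC(x) = 1 - H₊(q_{1-x}) + q_{1-x} (H₋(q_{1-x}) - (1-x))` for `0 < x < 1`. -/
theorem tpr_and_roc_of_randomized_LR_rule
    {Ω : Type*} [MeasurableSpace Ω]
    (Pm Pp : Measure Ω) [IsProbabilityMeasure Pm] [IsProbabilityMeasure Pp]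
    (hac : Pp ≪ Pm) (hac' : Pm ≪ Pp)
    (L : Ω → ℝ) (hLmeas : Measurable L)
    (hLpos : ∀ᵐ ω ∂Pm, 0 < L ω)
    (hRN : ∀ s : Set Ω, MeasurableSet s → (Pp s).toReal = ∫ ω in s, L ω ∂Pm)
    (Hm Hp : ℝ → ℝ)
    (hHm : ∀ l, Hm l = (Pm {ω | L ω ≤ l}).toReal)
    (hHp : ∀ l, Hp l = (Pp {ω | L ω ≤ l}).toReal)
    (q : ℝ → ℝ) (hq : ∀ t, q t = sInf {y : ℝ | t ≤ Hm y})
    (r : ℝ → ℝ)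
    (hr : ∀ t, r t = if leftLim Hm (q t) < Hm (q t)
        then (Hm (q t) - t) / (Hm (q t) - leftLim Hm (q t)) else 0)
    (ROC : ℝ → ℝ)
    (hROC : ∀ x ∈ Set.Ioo (0 : ℝ) 1,
        ROC x = 1 - Hp (q (1 - x)) + q (1 - x) * (Hm (q (1 - x)) - (1 - x))) :
    (∀ t ∈ Set.Ioo (0 : ℝ) 1,
        (Pp {ω | q t < L ω}).toReal + r t * (Pp {ω | L ω = q t}).toReal
          = 1 - Hp (q t) + q t * (Hm (q t) - t)) ∧
    (∀ x ∈ Set.Ioo (0 : ℝ) 1,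
        (Pp {ω | q (1 - x) < L ω}).toReal
          + r (1 - x) * (Pp {ω | L ω = q (1 - x)}).toReal = ROC x) :=
  tpr_and_roc_of_randomized_LR_rule_general Pm Pp L hLmeas hRN Hm Hp hHm hHp q hq r hr ROC hROC
end

section
/- For every x ∈ [0, 1], ROC(x) = 1 − φ(1 − x), where φ is the concentration function of P₊ with respect to P₋ and ROC is the LR-based ROC function. -/
/-!
Write `l = q (1 - x)`. Subtracting the two formulas, `ROC x - (1 - φ (1 - x))` equals
`l · (H₋(l) - H₋(l⁻)) - P₊(L = l) = l · P₋(L = l) - P₊(L = l)`, and this vanishes because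
`P₊(L = l) = ∫_{L = l} L dP₋ = l · P₋(L = l)`.
-/

open MeasureTheory Function Set ProbabilityTheory

lemma ProbabilityTheory.cdf_sub_leftLim_cdf_s4 (μ : Measure ℝ) [IsProbabilityMeasure μ] (x : ℝ) :
    cdf μ x - leftLim (cdf μ) x = μ.real {x} := by
  have h := (cdf μ).measure_singleton x
  rw [measure_cdf] at h
  rw [measureReal_def, h, ENNReal.toReal_ofReal (sub_nonneg.2 ((cdf μ).mono.leftLim_le le_rfl))]

section Preimage

variable {Ω : Type*} [MeasurableSpace Ω] (μ : Measure Ω) {f : Ω → ℝ}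

lemma MeasureTheory.measureReal_preimage_Iic_eq_add [IsFiniteMeasure μ] (hf : Measurable f)
    (c : ℝ) : μ.real (f ⁻¹' Iic c) = μ.real (f ⁻¹' Iio c) + μ.real (f ⁻¹' {c}) := by
  rw [← Iio_union_right, preimage_union, measureReal_union
    (Disjoint.preimage f (by simp)) (hf (measurableSet_singleton c))]

lemma MeasureTheory.setIntegral_preimage_singleton (hf : Measurable f) (c : ℝ) :
    ∫ ω in f ⁻¹' {c}, f ω ∂μ = c * μ.real (f ⁻¹' {c}) := by
  rw [setIntegral_congr_fun (hf (measurableSet_singleton c)) fun ω hω => hω,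
    setIntegral_const, smul_eq_mul, mul_comm]

lemma ProbabilityTheory.cdf_map_eq_measureReal_preimage [IsProbabilityMeasure μ]
    (hf : Measurable f) (c : ℝ) : cdf (μ.map f) c = μ.real (f ⁻¹' Iic c) := by
  have := Measure.isProbabilityMeasure_map (μ := μ) hf.aemeasurable
  rw [cdf_eq_real, map_measureReal_apply hf measurableSet_Iic]

end Preimage

theorem roc_eq_one_sub_concentration_general
    {Ω : Type*} [MeasurableSpace Ω]
    (Pm Pp : Measure Ω) [IsProbabilityMeasure Pm] [IsProbabilityMeasure Pp]
    (L : Ω → ℝ) (hLmeas : Measurable L)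
    (hRN : ∀ s : Set Ω, MeasurableSet s → (Pp s).toReal = ∫ ω in s, L ω ∂Pm)
    (Hm Hp : ℝ → ℝ)
    (hHm : ∀ l, Hm l = (Pm {ω | L ω ≤ l}).toReal)
    (hHp : ∀ l, Hp l = (Pp {ω | L ω ≤ l}).toReal)
    (q : ℝ → ℝ)
    (ROC : ℝ → ℝ)
    (hROC0 : ROC 0 = 0) (hROC1 : ROC 1 = 1)
    (hROC : ∀ x ∈ Set.Ioo (0 : ℝ) 1,
        ROC x = 1 - Hp (q (1 - x)) + q (1 - x) * (Hm (q (1 - x)) - (1 - x)))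
    (φ : ℝ → ℝ)
    (hφ0 : φ 0 = 0) (hφ1 : φ 1 = 1)
    (hφ : ∀ x ∈ Set.Ioo (0 : ℝ) 1,
        φ x = (Pp {ω | L ω < q x}).toReal + q x * (x - leftLim Hm (q x))) :
    ∀ x ∈ Set.Icc (0 : ℝ) 1, ROC x = 1 - φ (1 - x) := by
  intro x ⟨hx0, hx1⟩
  rcases hx0.eq_or_lt with rfl | hx0
  · simp [hROC0, hφ1]
  rcases hx1.eq_or_lt with rfl | hx1
  · simp [hROC1, hφ0]
  have hHm_cdf : Hm = cdf (Pm.map L) :=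
    funext fun l => by rw [hHm, cdf_map_eq_measureReal_preimage Pm hLmeas]; rfl
  rw [hROC x ⟨hx0, hx1⟩, hφ (1 - x) ⟨by linarith, by linarith⟩, hHp]
  set l := q (1 - x)
  have hjump : Hm l - leftLim Hm l = Pm.real (L ⁻¹' {l}) := by
    have := Measure.isProbabilityMeasure_map (μ := Pm) hLmeas.aemeasurable
    rw [hHm_cdf, cdf_sub_leftLim_cdf_s4, map_measureReal_apply hLmeas (measurableSet_singleton l)]
  have hatom : Pp.real (L ⁻¹' {l}) = l * Pm.real (L ⁻¹' {l}) := by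
    rw [measureReal_def, hRN _ (hLmeas (measurableSet_singleton l)),
      setIntegral_preimage_singleton Pm hLmeas]
  have hsplit : Pp.real {ω | L ω ≤ l} = Pp.real {ω | L ω < l} + Pp.real (L ⁻¹' {l}) :=
    measureReal_preimage_Iic_eq_add Pp hLmeas l
  simp only [← measureReal_def]
  linear_combination (-1 : ℝ) * hsplit + l * hjump - hatom

/-- For every `x ∈ [0,1]`, `ROC(x) = 1 - φ(1-x)`, where `φ` is the
concentration function of `P₊` with respect to `P₋` and `ROC` is the LR-based
ROC function. -/
theorem roc_eq_one_sub_concentration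
    {Ω : Type*} [MeasurableSpace Ω]
    (Pm Pp : Measure Ω) [IsProbabilityMeasure Pm] [IsProbabilityMeasure Pp]
    (hac : Pp ≪ Pm) (hac' : Pm ≪ Pp)
    (L : Ω → ℝ) (hLmeas : Measurable L)
    (hLpos : ∀ᵐ ω ∂Pm, 0 < L ω)
    (hRN : ∀ s : Set Ω, MeasurableSet s → (Pp s).toReal = ∫ ω in s, L ω ∂Pm)
    (Hm Hp : ℝ → ℝ)
    (hHm : ∀ l, Hm l = (Pm {ω | L ω ≤ l}).toReal)
    (hHp : ∀ l, Hp l = (Pp {ω | L ω ≤ l}).toReal)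
    (q : ℝ → ℝ) (hq : ∀ t, q t = sInf {y : ℝ | t ≤ Hm y})
    (ROC : ℝ → ℝ)
    (hROC0 : ROC 0 = 0) (hROC1 : ROC 1 = 1)
    (hROC : ∀ x ∈ Set.Ioo (0 : ℝ) 1,
        ROC x = 1 - Hp (q (1 - x)) + q (1 - x) * (Hm (q (1 - x)) - (1 - x)))
    (φ : ℝ → ℝ)
    (hφ0 : φ 0 = 0) (hφ1 : φ 1 = 1)
    (hφ : ∀ x ∈ Set.Ioo (0 : ℝ) 1,
        φ x = (Pp {ω | L ω < q x}).toReal + q x * (x - leftLim Hm (q x))) :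
    ∀ x ∈ Set.Icc (0 : ℝ) 1, ROC x = 1 - φ (1 - x) :=
  roc_eq_one_sub_concentration_general Pm Pp L hLmeas hRN Hm Hp hHm hHp q ROC hROC0 hROC1 hROC φ hφ0
    hφ1 hφ
end

section
/- The LR-based ROC function is a nondecreasing, continuous and concave function on [0, 1] (with ROC(0) = 0 and ROC(1) = 1); in particular it is a proper ROC curve. -/
open MeasureTheory Function Set

/-! Write `g l = ∫ (L - l)⁺ dP₋` for the stop-loss transform of `L` under `P₋`. Since
`dP₊ = L dP₋`, the ROC formula reads `ROC x = q x + g q` with `q = q_{1-x}`. The function `g` is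
convex with one-sided slopes `-P₋(L ≥ q)` and `-P₋(L > q)` at `q`, and the defining properties of
the quantile say exactly that `x` lies between `P₋(L > q)` and `P₋(L ≥ q)`; so `q` minimises
`l ↦ l x + g l` over `l ≥ 0`. Hence ROC is the lower envelope of the lines `x ↦ l x + g l` with
nonnegative slopes, which is nondecreasing and concave, and continuous also at `0` because an
infimum of continuous functions is upper semicontinuous. The endpoint values match since
`g l → 0` as `l → ∞` and `g 0 = ∫ L dP₋ = 1`. -/

open Filter Topology ProbabilityTheory
open scoped NNReal

noncomputable def lowerEnvelope (g : ℝ → ℝ) (x : ℝ) : ℝ :=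
  ⨅ l : ℝ≥0, (l : ℝ) * x + g l

section LowerEnvelope

variable {g : ℝ → ℝ} {x : ℝ}

lemma bddBelow_range_lines (hg : BddBelow (range g)) (hx : 0 ≤ x) :
    BddBelow (range fun l : ℝ≥0 ↦ (l : ℝ) * x + g l) := by
  obtain ⟨c, hc⟩ := hg
  refine ⟨c, ?_⟩
  rintro _ ⟨l, rfl⟩
  linarith [hc (mem_range_self (l : ℝ)), mul_nonneg l.coe_nonneg hx]

lemma lowerEnvelope_le (hg : BddBelow (range g)) (hx : 0 ≤ x) (l : ℝ≥0) :
    lowerEnvelope g x ≤ l * x + g l :=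
  ciInf_le (bddBelow_range_lines hg hx) l

lemma le_lowerEnvelope {c : ℝ} (h : ∀ l : ℝ≥0, c ≤ l * x + g l) : c ≤ lowerEnvelope g x :=
  le_ciInf h

lemma lowerEnvelope_eq_of_forall_le {l₀ : ℝ≥0} (hg : BddBelow (range g)) (hx : 0 ≤ x)
    (h : ∀ l : ℝ≥0, l₀ * x + g l₀ ≤ l * x + g l) : lowerEnvelope g x = l₀ * x + g l₀ :=
  le_antisymm (lowerEnvelope_le hg hx l₀) (le_lowerEnvelope h)

lemma monotoneOn_lowerEnvelope (hg : BddBelow (range g)) :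
    MonotoneOn (lowerEnvelope g) (Ici 0) := fun a ha b _ hab ↦
  le_lowerEnvelope fun l ↦ (lowerEnvelope_le hg ha l).trans <| by
    gcongr

lemma concaveOn_lowerEnvelope (hg : BddBelow (range g)) :
    ConcaveOn ℝ (Ici 0) (lowerEnvelope g) := by
  refine ⟨convex_Ici 0, fun a ha b hb u v hu hv huv ↦ le_lowerEnvelope fun l ↦ ?_⟩
  calc u • lowerEnvelope g a + v • lowerEnvelope g b
      ≤ u * (l * a + g l) + v * (l * b + g l) := by
        simp only [smul_eq_mul]
        gcongr
        exacts [lowerEnvelope_le hg ha l, lowerEnvelope_le hg hb l]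
    _ = l * (u • a + v • b) + g l := by
        simp only [smul_eq_mul]
        linear_combination g l * huv

lemma continuousWithinAt_lowerEnvelope_zero (hg : BddBelow (range g)) :
    ContinuousWithinAt (lowerEnvelope g) (Ici 0) 0 := by
  refine tendsto_order.2 ⟨fun b hb ↦ ?_, fun b hb ↦ ?_⟩
  · filter_upwards [self_mem_nhdsWithin] with y hy
    exact hb.trans_le (monotoneOn_lowerEnvelope hg self_mem_Ici hy hy)
  · obtain ⟨l, hl⟩ := exists_lt_of_ciInf_lt hb
    have hline : ContinuousAt (fun y : ℝ ↦ (l : ℝ) * y + g l) 0 := by fun_prop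
    filter_upwards [nhdsWithin_le_nhds (hline.eventually (gt_mem_nhds hl)),
      self_mem_nhdsWithin] with y hy hy₀
    exact (lowerEnvelope_le hg hy₀ l).trans_lt hy

lemma continuousOn_lowerEnvelope (hg : BddBelow (range g)) :
    ContinuousOn (lowerEnvelope g) (Ici 0) := by
  intro x hx
  rcases (mem_Ici.1 hx).eq_or_lt with rfl | hx₀
  · exact continuousWithinAt_lowerEnvelope_zero hg
  · have := (concaveOn_lowerEnvelope hg).continuousOn_interior x (by simpa using hx₀)
    exact (this.continuousAt (by simpa using Ioi_mem_nhds hx₀)).continuousWithinAt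

end LowerEnvelope

lemma measureReal_Iio_eq_leftLim_cdf (ν : Measure ℝ) [IsProbabilityMeasure ν] (x : ℝ) :
    ν.real (Iio x) = leftLim (cdf ν) x := by
  have hatom : ν.real {x} = cdf ν x - leftLim (cdf ν) x := by
    have h := (cdf ν).measure_singleton x
    rw [measure_cdf] at h
    rw [measureReal_def, h,
      ENNReal.toReal_ofReal (sub_nonneg.2 ((monotone_cdf ν).leftLim_le le_rfl))]
  rw [← Iic_sdiff_right, measureReal_sdiff (singleton_subset_iff.2 self_mem_Iic)
    (measurableSet_singleton x), ← cdf_eq_real, hatom]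
  ring

noncomputable def quantile (ν : Measure ℝ) (t : ℝ) : ℝ :=
  sInf {y | t ≤ cdf ν y}

section Quantile

variable {ν : Measure ℝ} {t : ℝ}

lemma nonempty_setOf_le_cdf (ht : t < 1) : {y | t ≤ cdf ν y}.Nonempty :=
  ((tendsto_cdf_atTop ν).eventually (lt_mem_nhds ht)).exists.imp fun _ h ↦ le_of_lt h

lemma bddBelow_setOf_le_cdf (ht : 0 < t) : BddBelow {y | t ≤ cdf ν y} := by
  obtain ⟨y₀, hy₀⟩ := eventually_atBot.1 ((tendsto_cdf_atBot ν).eventually (gt_mem_nhds ht))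
  exact ⟨y₀, fun y hy ↦ le_of_not_ge fun hyy ↦ (hy₀ y hyy).not_ge hy⟩

lemma le_cdf_quantile [IsProbabilityMeasure ν] (ht₁ : t < 1) : t ≤ cdf ν (quantile ν t) := by
  refine ge_of_tendsto (((cdf ν).right_continuous _).mono Ioi_subset_Ici_self)
    (eventually_nhdsWithin_of_forall fun y hy ↦ ?_)
  obtain ⟨s, hs, hsy⟩ := exists_lt_of_csInf_lt (nonempty_setOf_le_cdf ht₁) hy
  exact hs.trans (monotone_cdf ν hsy.le)

lemma measureReal_Iio_quantile_le [IsProbabilityMeasure ν] (ht₀ : 0 < t) :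
    ν.real (Iio (quantile ν t)) ≤ t := by
  rw [measureReal_Iio_eq_leftLim_cdf]
  refine le_of_tendsto ((monotone_cdf ν).tendsto_leftLim _)
    (eventually_nhdsWithin_of_forall fun y hy ↦ ?_)
  exact (not_le.1 (notMem_of_lt_csInf (s := {y | t ≤ cdf ν y}) hy (bddBelow_setOf_le_cdf ht₀))).le

lemma quantile_nonneg [IsProbabilityMeasure ν] (hν : ∀ᵐ y ∂ν, 0 ≤ y) (ht₀ : 0 < t) (ht₁ : t < 1) :
    0 ≤ quantile ν t := by
  refine le_csInf (nonempty_setOf_le_cdf ht₁) fun y hy ↦ le_of_not_gt fun hy₀ ↦ ?_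
  have hnull : ν (Iic y) = 0 :=
    measure_mono_null (fun z hz ↦ not_le.2 (lt_of_le_of_lt hz hy₀)) (ae_iff.1 hν)
  have hty : t ≤ cdf ν y := hy
  rw [cdf_eq_real, measureReal_def, hnull, ENNReal.toReal_zero] at hty
  exact hty.not_gt ht₀

end Quantile

noncomputable def stopLoss {Ω : Type*} [MeasurableSpace Ω] (μ : Measure Ω) (L : Ω → ℝ) (l : ℝ) :
    ℝ :=
  ∫ ω, max (L ω - l) 0 ∂μ

section StopLoss

variable {Ω : Type*} [MeasurableSpace Ω] {μ : Measure Ω} {L : Ω → ℝ}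

lemma stopLoss_nonneg (l : ℝ) : 0 ≤ stopLoss μ L l :=
  integral_nonneg fun _ ↦ le_max_right _ _

lemma bddBelow_range_stopLoss : BddBelow (range (stopLoss μ L)) :=
  ⟨0, by rintro _ ⟨l, rfl⟩; exact stopLoss_nonneg l⟩

lemma stopLoss_eq_setIntegral_sub [IsFiniteMeasure μ] (hLm : Measurable L) (hL : Integrable L μ)
    (l : ℝ) :
    stopLoss μ L l = ∫ ω in {ω | l < L ω}, L ω ∂μ - l * μ.real {ω | l < L ω} := by
  have hs : MeasurableSet {ω | l < L ω} := measurableSet_lt measurable_const hLm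
  have hpos : (fun ω ↦ max (L ω - l) 0) = {ω | l < L ω}.indicator (fun ω ↦ L ω - l) := by
    ext ω
    by_cases h : l < L ω
    · simp [indicator_of_mem (show ω ∈ {ω | l < L ω} from h), h.le]
    · simp [h, not_lt.1 h]
  rw [stopLoss, hpos, integral_indicator hs, integral_sub hL.integrableOn (integrableOn_const),
    setIntegral_const, smul_eq_mul, mul_comm]

lemma stopLoss_add_le [IsFiniteMeasure μ] (hL : Integrable L μ) {s : Set Ω} (hs : MeasurableSet s)
    {q : ℝ} (hs₁ : ∀ ω, q < L ω → ω ∈ s) (hs₂ : ∀ ω ∈ s, q ≤ L ω) (m : ℝ) :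
    stopLoss μ L q + (q - m) * μ.real s ≤ stopLoss μ L m := by
  have hpos : ∀ l, Integrable (fun ω ↦ max (L ω - l) 0) μ := fun l ↦
    (hL.sub (integrable_const l)).pos_part
  rw [stopLoss, mul_comm, ← smul_eq_mul, ← integral_indicator_const _ hs,
    ← integral_add (hpos q) ((integrable_const _).indicator hs)]
  refine integral_mono ((hpos q).add ((integrable_const _).indicator hs)) (hpos m) fun ω ↦ ?_
  by_cases hω : ω ∈ s
  · have := hs₂ ω hω
    simp only [indicator_of_mem hω, max_eq_left (sub_nonneg.2 this)]
    linarith [le_max_left (L ω - m) 0]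
  · have := not_lt.1 (mt (hs₁ ω) hω)
    simp only [indicator_of_notMem hω, max_eq_right (sub_nonpos.2 this)]
    linarith [le_max_right (L ω - m) 0]

lemma probReal_setOf_lt [IsProbabilityMeasure μ] (hLm : Measurable L) (q : ℝ) :
    μ.real {ω | q < L ω} = 1 - μ.real {ω | L ω ≤ q} := by
  rw [← probReal_compl_eq_one_sub (measurableSet_le hLm measurable_const)]
  congr 1; ext; simp

lemma probReal_setOf_le [IsProbabilityMeasure μ] (hLm : Measurable L) (q : ℝ) :
    μ.real {ω | q ≤ L ω} = 1 - μ.real {ω | L ω < q} := by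
  rw [← probReal_compl_eq_one_sub (measurableSet_lt hLm measurable_const)]
  congr 1; ext; simp

lemma mul_add_stopLoss_le [IsProbabilityMeasure μ] (hLm : Measurable L) (hL : Integrable L μ)
    {q x : ℝ} (h₁ : 1 - x ≤ μ.real {ω | L ω ≤ q}) (h₂ : μ.real {ω | L ω < q} ≤ 1 - x) (m : ℝ) :
    q * x + stopLoss μ L q ≤ m * x + stopLoss μ L m := by
  rcases le_total q m with hqm | hmq
  · have hs : MeasurableSet {ω | q < L ω} := measurableSet_lt measurable_const hLm
    have hx : μ.real {ω | q < L ω} ≤ x := by linarith [probReal_setOf_lt (μ := μ) hLm q]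
    have := stopLoss_add_le hL hs (fun _ h ↦ h) (fun _ h ↦ le_of_lt h) m
    nlinarith
  · have hs : MeasurableSet {ω | q ≤ L ω} := measurableSet_le measurable_const hLm
    have hx : x ≤ μ.real {ω | q ≤ L ω} := by linarith [probReal_setOf_le (μ := μ) hLm q]
    have := stopLoss_add_le hL hs (fun _ h ↦ le_of_lt h) (fun _ h ↦ h) m
    nlinarith

lemma tendsto_stopLoss_atTop (hL : Integrable L μ) : Tendsto (stopLoss μ L) atTop (𝓝 0) := by
  have hlim := tendsto_integral_filter_of_dominated_convergence (μ := μ) (l := atTop)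
    (F := fun l ω ↦ max (L ω - l) 0) (f := 0) (fun ω ↦ |L ω|)
    (Eventually.of_forall fun l ↦
      ((hL.1.aemeasurable.sub_const l).max aemeasurable_const).aestronglyMeasurable)
    ?_ hL.abs (ae_of_all _ fun ω ↦ ?_)
  · exact (by simpa using hlim : Tendsto (fun l ↦ ∫ ω, max (L ω - l) 0 ∂μ) atTop (𝓝 0))
  · filter_upwards [eventually_ge_atTop 0] with l hl
    refine ae_of_all _ fun ω ↦ ?_
    rw [Real.norm_eq_abs, abs_of_nonneg (le_max_right _ _)]
    exact max_le (by linarith [le_abs_self (L ω)]) (abs_nonneg _)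
  · refine tendsto_const_nhds.congr' ?_
    filter_upwards [eventually_ge_atTop (L ω)] with l hl
    simp [max_eq_right (sub_nonpos.2 hl)]

lemma lowerEnvelope_stopLoss_zero (hL : Integrable L μ) : lowerEnvelope (stopLoss μ L) 0 = 0 := by
  refine le_antisymm (ge_of_tendsto (tendsto_stopLoss_atTop hL) ?_)
    (le_lowerEnvelope fun l ↦ by simpa using stopLoss_nonneg l)
  filter_upwards [eventually_ge_atTop 0] with l hl
  rw [← Real.coe_toNNReal l hl]
  simpa using lowerEnvelope_le bddBelow_range_stopLoss le_rfl l.toNNReal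

lemma lowerEnvelope_stopLoss_one [IsProbabilityMeasure μ] (hL : Integrable L μ) (h₀ : 0 ≤ᵐ[μ] L) :
    lowerEnvelope (stopLoss μ L) 1 = ∫ ω, L ω ∂μ := by
  have hzero : stopLoss μ L 0 = ∫ ω, L ω ∂μ :=
    integral_congr_ae <| h₀.mono fun ω (h : 0 ≤ L ω) ↦ by simp [h]
  have hg : BddBelow (range (stopLoss μ L)) := bddBelow_range_stopLoss
  refine le_antisymm (by simpa [hzero] using lowerEnvelope_le hg zero_le_one 0)
    (le_lowerEnvelope fun l ↦ ?_)
  have hpos : Integrable (fun ω ↦ max (L ω - l) 0) μ := (hL.sub (integrable_const _)).pos_part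
  calc ∫ ω, L ω ∂μ ≤ ∫ ω, ((l : ℝ) + max (L ω - l) 0) ∂μ :=
        integral_mono hL ((integrable_const _).add hpos) fun ω ↦ by
          linarith [le_max_left (L ω - l) 0]
    _ = l * 1 + stopLoss μ L l := by
        rw [integral_add (integrable_const _) hpos, integral_const, stopLoss]
        simp

lemma cdf_map_apply [IsProbabilityMeasure μ] (hLm : Measurable L) (y : ℝ) :
    cdf (μ.map L) y = μ.real {ω | L ω ≤ y} := by
  have := Measure.isProbabilityMeasure_map (μ := μ) hLm.aemeasurable
  rw [cdf_eq_real, map_measureReal_apply hLm measurableSet_Iic]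
  rfl

lemma lowerEnvelope_stopLoss_eq_quantile [IsProbabilityMeasure μ] (hLm : Measurable L)
    (hL : Integrable L μ) (h₀ : 0 ≤ᵐ[μ] L) {x : ℝ} (hx₀ : 0 < x) (hx₁ : x < 1) :
    lowerEnvelope (stopLoss μ L) x =
      quantile (μ.map L) (1 - x) * x + stopLoss μ L (quantile (μ.map L) (1 - x)) := by
  have := Measure.isProbabilityMeasure_map (μ := μ) hLm.aemeasurable
  set q := quantile (μ.map L) (1 - x)
  have hq : 0 ≤ q := quantile_nonneg ((ae_map_iff hLm.aemeasurable measurableSet_Ici).2 h₀)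
    (by linarith) (by linarith)
  have h₁ : 1 - x ≤ μ.real {ω | L ω ≤ q} := by
    simpa only [cdf_map_apply hLm] using le_cdf_quantile (ν := μ.map L) (t := 1 - x) (by linarith)
  have h₂ : μ.real {ω | L ω < q} ≤ 1 - x := by
    have := measureReal_Iio_quantile_le (ν := μ.map L) (t := 1 - x) (by linarith)
    rwa [map_measureReal_apply hLm measurableSet_Iio] at this
  exact lowerEnvelope_eq_of_forall_le (l₀ := ⟨q, hq⟩) bddBelow_range_stopLoss hx₀.le fun l ↦
    mul_add_stopLoss_le hLm hL h₁ h₂ l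

end StopLoss

theorem roc_monotone_continuous_concave_general
    {Ω : Type*} [MeasurableSpace Ω]
    (Pm Pp : Measure Ω) [IsProbabilityMeasure Pm] [IsProbabilityMeasure Pp]
    (L : Ω → ℝ) (hLmeas : Measurable L)
    (hLpos : ∀ᵐ ω ∂Pm, 0 < L ω)
    (hRN : ∀ s : Set Ω, MeasurableSet s → (Pp s).toReal = ∫ ω in s, L ω ∂Pm)
    (Hm Hp : ℝ → ℝ)
    (hHm : ∀ l, Hm l = (Pm {ω | L ω ≤ l}).toReal)
    (hHp : ∀ l, Hp l = (Pp {ω | L ω ≤ l}).toReal)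
    (q : ℝ → ℝ) (hq : ∀ t, q t = sInf {y : ℝ | t ≤ Hm y})
    (ROC : ℝ → ℝ)
    (hROC0 : ROC 0 = 0) (hROC1 : ROC 1 = 1)
    (hROC : ∀ x ∈ Set.Ioo (0 : ℝ) 1,
        ROC x = 1 - Hp (q (1 - x)) + q (1 - x) * (Hm (q (1 - x)) - (1 - x))) :
    MonotoneOn ROC (Set.Icc (0 : ℝ) 1) ∧
    ContinuousOn ROC (Set.Icc (0 : ℝ) 1) ∧
    ConcaveOn ℝ (Set.Icc (0 : ℝ) 1) ROC := by
  have hmass : ∫ ω, L ω ∂Pm = 1 := by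
    rw [← setIntegral_univ, ← hRN univ MeasurableSet.univ, measure_univ, ENNReal.toReal_one]
  have hL : Integrable L Pm := Integrable.of_integral_ne_zero (by rw [hmass]; exact one_ne_zero)
  have h₀ : 0 ≤ᵐ[Pm] L := hLpos.mono fun _ h ↦ h.le
  have hquantile : ∀ t, q t = quantile (Pm.map L) t := fun t ↦ by
    simp only [hq, hHm, quantile, cdf_map_apply hLmeas, measureReal_def]
  have hline : ∀ l x, 1 - Hp l + l * (Hm l - (1 - x)) = l * x + stopLoss Pm L l := fun l x ↦ by
    have hPp := probReal_setOf_lt (μ := Pp) hLmeas l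
    have hPm := probReal_setOf_lt (μ := Pm) hLmeas l
    have hdens := hRN _ (measurableSet_lt (measurable_const (a := l)) hLmeas)
    rw [hHp, hHm, stopLoss_eq_setIntegral_sub hLmeas hL]
    simp only [measureReal_def] at hPp hPm ⊢
    linear_combination hdens - hPp + l * hPm
  have hEq : EqOn ROC (lowerEnvelope (stopLoss Pm L)) (Icc 0 1) := by
    rintro x ⟨hx₀, hx₁⟩
    rcases hx₀.eq_or_lt with rfl | hx₀
    · rw [hROC0, lowerEnvelope_stopLoss_zero hL]
    rcases hx₁.eq_or_lt with rfl | hx₁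
    · rw [hROC1, lowerEnvelope_stopLoss_one hL h₀, hmass]
    rw [hROC x ⟨hx₀, hx₁⟩, hline, hquantile,
      lowerEnvelope_stopLoss_eq_quantile hLmeas hL h₀ hx₀ hx₁]
  have hg : BddBelow (range (stopLoss Pm L)) := bddBelow_range_stopLoss
  exact ⟨((monotoneOn_lowerEnvelope hg).mono Icc_subset_Ici_self).congr hEq.symm,
    ((continuousOn_lowerEnvelope hg).mono Icc_subset_Ici_self).congr hEq,
    ((concaveOn_lowerEnvelope hg).subset Icc_subset_Ici_self (convex_Icc 0 1)).congr hEq.symm⟩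

/-- The LR-based ROC function is nondecreasing, continuous and concave
on `[0,1]` (with `ROC(0) = 0` and `ROC(1) = 1`); in particular it is proper. -/
theorem roc_monotone_continuous_concave
    {Ω : Type*} [MeasurableSpace Ω]
    (Pm Pp : Measure Ω) [IsProbabilityMeasure Pm] [IsProbabilityMeasure Pp]
    (hac : Pp ≪ Pm) (hac' : Pm ≪ Pp)
    (L : Ω → ℝ) (hLmeas : Measurable L)
    (hLpos : ∀ᵐ ω ∂Pm, 0 < L ω)
    (hRN : ∀ s : Set Ω, MeasurableSet s → (Pp s).toReal = ∫ ω in s, L ω ∂Pm)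
    (Hm Hp : ℝ → ℝ)
    (hHm : ∀ l, Hm l = (Pm {ω | L ω ≤ l}).toReal)
    (hHp : ∀ l, Hp l = (Pp {ω | L ω ≤ l}).toReal)
    (q : ℝ → ℝ) (hq : ∀ t, q t = sInf {y : ℝ | t ≤ Hm y})
    (ROC : ℝ → ℝ)
    (hROC0 : ROC 0 = 0) (hROC1 : ROC 1 = 1)
    (hROC : ∀ x ∈ Set.Ioo (0 : ℝ) 1,
        ROC x = 1 - Hp (q (1 - x)) + q (1 - x) * (Hm (q (1 - x)) - (1 - x))) :
    MonotoneOn ROC (Set.Icc (0 : ℝ) 1) ∧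
    ContinuousOn ROC (Set.Icc (0 : ℝ) 1) ∧
    ConcaveOn ℝ (Set.Icc (0 : ℝ) 1) ROC :=
  roc_monotone_continuous_concave_general Pm Pp L hLmeas hLpos hRN Hm Hp hHm hHp q hq ROC hROC0
    hROC1 hROC
end

section
/- The LR-based ROC function lies above the 45-degree line: ROC(x) ≥ x for every x ∈ [0, 1]. -/
/-!
Integrating `L = dP₊/dP₋` over `{L ≤ l}` and over `{L > l}` gives
`H₊(l) ≤ l · H₋(l)` and `l · (1 - H₋(l)) ≤ 1 - H₊(l)` for every threshold `l`. Plugged into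
`ROC(x) = 1 - H₊(l) + l · (H₋(l) - (1 - x))` these give `ROC(x) ≥ 1 - l (1 - x)` and
`ROC(x) ≥ l x`; the first is `≥ x` when `l ≤ 1`, the second when `l ≥ 1`.
-/

open MeasureTheory Set

section DensityBounds

variable {Ω : Type*} [MeasurableSpace Ω] {μ ν : Measure Ω} [IsFiniteMeasure μ]
  {L : Ω → ℝ} {s : Set Ω} {l : ℝ}

theorem measureReal_le_mul_of_forall_le (hL : IntegrableOn L s μ) (hs : MeasurableSet s)
    (hν : ν.real s = ∫ ω in s, L ω ∂μ) (h : ∀ ω ∈ s, L ω ≤ l) :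
    ν.real s ≤ l * μ.real s := by
  rw [hν, mul_comm, ← smul_eq_mul, ← setIntegral_const]
  exact setIntegral_mono_on hL integrableOn_const hs h

theorem mul_measureReal_le_of_forall_le (hL : IntegrableOn L s μ) (hs : MeasurableSet s)
    (hν : ν.real s = ∫ ω in s, L ω ∂μ) (h : ∀ ω ∈ s, l ≤ L ω) :
    l * μ.real s ≤ ν.real s := by
  rw [hν, mul_comm, ← smul_eq_mul, ← setIntegral_const]
  exact setIntegral_mono_on integrableOn_const hL hs h

end DensityBounds

theorem le_one_sub_add_mul_of_bounds {p m l x : ℝ} (hbelow : p ≤ l * m)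
    (habove : l * (1 - m) ≤ 1 - p) (hx₀ : 0 ≤ x) (hx₁ : x ≤ 1) :
    x ≤ 1 - p + l * (m - (1 - x)) := by
  rcases le_total l 1 with hl | hl
  · nlinarith
  · nlinarith

theorem roc_above_diagonal_general
    {Ω : Type*} [MeasurableSpace Ω]
    (Pm Pp : Measure Ω) [IsProbabilityMeasure Pm] [IsProbabilityMeasure Pp]
    (L : Ω → ℝ) (hLmeas : Measurable L)
    (hRN : ∀ s : Set Ω, MeasurableSet s → (Pp s).toReal = ∫ ω in s, L ω ∂Pm)
    (Hm Hp : ℝ → ℝ)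
    (hHm : ∀ l, Hm l = (Pm {ω | L ω ≤ l}).toReal)
    (hHp : ∀ l, Hp l = (Pp {ω | L ω ≤ l}).toReal)
    (q : ℝ → ℝ)
    (ROC : ℝ → ℝ)
    (hROC0 : ROC 0 = 0) (hROC1 : ROC 1 = 1)
    (hROC : ∀ x ∈ Set.Ioo (0 : ℝ) 1,
        ROC x = 1 - Hp (q (1 - x)) + q (1 - x) * (Hm (q (1 - x)) - (1 - x))) :
    ∀ x ∈ Set.Icc (0 : ℝ) 1, x ≤ ROC x := by
  intro x ⟨hx₀, hx₁⟩
  rcases hx₀.eq_or_lt with rfl | hx₀'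
  · exact hROC0.ge
  rcases hx₁.eq_or_lt with rfl | hx₁'
  · exact hROC1.ge
  have hL : Integrable L Pm := .of_integral_ne_zero <| by
    rw [← setIntegral_univ, ← hRN univ .univ]
    simp
  set l := q (1 - x)
  have hs : MeasurableSet {ω | L ω ≤ l} := hLmeas measurableSet_Iic
  have hbelow : Hp l ≤ l * Hm l := by
    rw [hHp, hHm]
    exact measureReal_le_mul_of_forall_le hL.integrableOn hs (hRN _ hs) fun _ => id
  have habove : l * (1 - Hm l) ≤ 1 - Hp l := by
    rw [hHp, hHm, ← measureReal_def, ← measureReal_def, ← probReal_compl_eq_one_sub hs,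
      ← probReal_compl_eq_one_sub hs]
    exact mul_measureReal_le_of_forall_le hL.integrableOn hs.compl (hRN _ hs.compl)
      fun _ hω => le_of_lt (not_le.mp hω)
  rw [hROC x ⟨hx₀', hx₁'⟩]
  exact le_one_sub_add_mul_of_bounds hbelow habove hx₀ hx₁

/-- The LR-based ROC function lies above the 45-degree line:
`ROC(x) ≥ x` for every `x ∈ [0,1]`. -/
theorem roc_above_diagonal
    {Ω : Type*} [MeasurableSpace Ω]
    (Pm Pp : Measure Ω) [IsProbabilityMeasure Pm] [IsProbabilityMeasure Pp]
    (hac : Pp ≪ Pm) (hac' : Pm ≪ Pp)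
    (L : Ω → ℝ) (hLmeas : Measurable L)
    (hLpos : ∀ᵐ ω ∂Pm, 0 < L ω)
    (hRN : ∀ s : Set Ω, MeasurableSet s → (Pp s).toReal = ∫ ω in s, L ω ∂Pm)
    (Hm Hp : ℝ → ℝ)
    (hHm : ∀ l, Hm l = (Pm {ω | L ω ≤ l}).toReal)
    (hHp : ∀ l, Hp l = (Pp {ω | L ω ≤ l}).toReal)
    (q : ℝ → ℝ) (hq : ∀ t, q t = sInf {y : ℝ | t ≤ Hm y})
    (ROC : ℝ → ℝ)
    (hROC0 : ROC 0 = 0) (hROC1 : ROC 1 = 1)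
    (hROC : ∀ x ∈ Set.Ioo (0 : ℝ) 1,
        ROC x = 1 - Hp (q (1 - x)) + q (1 - x) * (Hm (q (1 - x)) - (1 - x))) :
    ∀ x ∈ Set.Icc (0 : ℝ) 1, x ≤ ROC x :=
  roc_above_diagonal_general Pm Pp L hLmeas hRN Hm Hp hHm hHp q ROC hROC0 hROC1 hROC
end

section
/- The randomized likelihood-ratio classification rule is optimal in the Neyman–Pearson sense: for every x ∈ (0, 1) and every measurable function ψ : Ω → [0, 1] (a randomized classification rule) with ∫ ψ dP₋ ≤ x, one has ∫ ψ dP₊ ≤ ROC(x), where ROC is the LR-based ROC function. -/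
open MeasureTheory Set

/-! Put `c = q (1 - x)`, which is `≥ 0` because `L > 0` `P₋`-a.e. For `ψ` with values in `[0, 1]`,
`(L - c) (ψ - 𝟙{L > c}) ≤ 0` pointwise, i.e. `L ψ ≤ L 𝟙{L > c} + c (ψ - 𝟙{L > c})`. Integrating
against `P₋` and using `∫ ψ dP₊ = ∫ L ψ dP₋` gives
`∫ ψ dP₊ ≤ P₊(L > c) + c (∫ ψ dP₋ - P₋(L > c)) ≤ 1 - H₊(c) + c (x - 1 + H₋(c)) = ROC(x)`,
the middle step using `c ≥ 0`. -/

section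

variable {Ω : Type*} [MeasurableSpace Ω] {μ : Measure Ω}

theorem integral_mul_le_setIntegral_add_mul [IsFiniteMeasure μ] {f g : Ω → ℝ}
    (hf : Integrable f μ) (hf_meas : Measurable f) (hg : AEStronglyMeasurable g μ)
    (hg01 : ∀ ω, g ω ∈ Icc (0 : ℝ) 1) (c : ℝ) :
    ∫ ω, f ω * g ω ∂μ ≤
      ∫ ω in {ω | c < f ω}, f ω ∂μ + c * (∫ ω, g ω ∂μ - μ.real {ω | c < f ω}) := by
  set A := {ω | c < f ω}
  have hA : MeasurableSet A := measurableSet_lt measurable_const hf_meas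
  have hg_le : ∀ᵐ ω ∂μ, ‖g ω‖ ≤ 1 := ae_of_all _ fun ω => by
    rw [Real.norm_eq_abs, abs_of_nonneg (hg01 ω).1]; exact (hg01 ω).2
  have hg_int : Integrable g μ := (integrable_const (1 : ℝ)).mono' hg hg_le
  have hfg_int : Integrable (fun ω => f ω * g ω) μ := hf.mul_bdd hg hg_le
  have hA_int : Integrable (A.indicator fun _ => (1 : ℝ)) μ := (integrable_const 1).indicator hA
  have hsum_int : Integrable (fun ω => A.indicator f ω + c * g ω) μ :=
    (hf.indicator hA).add (hg_int.const_mul c)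
  have hpointwise : ∀ ω,
      f ω * g ω ≤ A.indicator f ω + c * g ω - c * A.indicator (fun _ => (1 : ℝ)) ω := by
    intro ω
    obtain ⟨hg0, hg1⟩ := hg01 ω
    by_cases hω : c < f ω
    · simp only [indicator_of_mem (show ω ∈ A from hω)]
      nlinarith
    · simp only [indicator_of_notMem (show ω ∉ A from hω)]
      nlinarith
  calc ∫ ω, f ω * g ω ∂μ
      ≤ ∫ ω, A.indicator f ω + c * g ω - c * A.indicator (fun _ => (1 : ℝ)) ω ∂μ :=
        integral_mono hfg_int (hsum_int.sub (hA_int.const_mul c)) hpointwise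
    _ = _ := by
        rw [integral_sub hsum_int (hA_int.const_mul c),
          integral_add (hf.indicator hA) (hg_int.const_mul c), integral_const_mul,
          integral_const_mul, integral_indicator hA, integral_indicator_const _ hA, smul_eq_mul]
        ring

theorem integral_eq_integral_mul_of_measureReal_eq_setIntegral {ν : Measure Ω}
    [IsFiniteMeasure ν] {f : Ω → ℝ} (hf : Integrable f μ) (hf0 : 0 ≤ᵐ[μ] f)
    (h : ∀ s, MeasurableSet s → ν.real s = ∫ ω in s, f ω ∂μ) (g : Ω → ℝ) :
    ∫ ω, g ω ∂ν = ∫ ω, f ω * g ω ∂μ := by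
  have hν : ν = μ.withDensity fun ω => ENNReal.ofReal (f ω) := by
    ext s hs
    rw [withDensity_apply _ hs,
      ← ofReal_integral_eq_lintegral_ofReal hf.integrableOn (ae_restrict_of_ae hf0), ← h s hs,
      measureReal_def, ENNReal.ofReal_toReal (measure_ne_top _ _)]
  rw [hν, integral_withDensity_eq_integral_toReal_smul₀ hf.aemeasurable.ennreal_ofReal
    (ae_of_all _ fun _ => ENNReal.ofReal_lt_top)]
  refine integral_congr_ae (hf0.mono fun ω hω => ?_)
  simp [ENNReal.toReal_ofReal hω]

theorem sInf_setOf_le_measureReal_nonneg {f : Ω → ℝ} (hf : ∀ᵐ ω ∂μ, 0 < f ω) {t : ℝ}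
    (ht : 0 < t) : 0 ≤ sInf {y : ℝ | t ≤ μ.real {ω | f ω ≤ y}} := by
  refine Real.sInf_nonneg fun y hy => ?_
  by_contra! hy0
  have hnull : μ {ω | f ω ≤ y} = 0 :=
    measure_mono_null (fun ω hω => not_lt.2 (le_trans hω hy0.le)) (ae_iff.1 hf)
  have : t ≤ 0 := by simpa [measureReal_def, hnull] using hy
  linarith

end

theorem roc_neyman_pearson_optimal_general
    {Ω : Type*} [MeasurableSpace Ω]
    (Pm Pp : Measure Ω) [IsProbabilityMeasure Pm] [IsProbabilityMeasure Pp]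
    (L : Ω → ℝ) (hLmeas : Measurable L)
    (hLpos : ∀ᵐ ω ∂Pm, 0 < L ω)
    (hRN : ∀ s : Set Ω, MeasurableSet s → (Pp s).toReal = ∫ ω in s, L ω ∂Pm)
    (Hm Hp : ℝ → ℝ)
    (hHm : ∀ l, Hm l = (Pm {ω | L ω ≤ l}).toReal)
    (hHp : ∀ l, Hp l = (Pp {ω | L ω ≤ l}).toReal)
    (q : ℝ → ℝ) (hq : ∀ t, q t = sInf {y : ℝ | t ≤ Hm y})
    (ROC : ℝ → ℝ)
    (hROC : ∀ x ∈ Set.Ioo (0 : ℝ) 1,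
        ROC x = 1 - Hp (q (1 - x)) + q (1 - x) * (Hm (q (1 - x)) - (1 - x))) :
    ∀ x ∈ Set.Ioo (0 : ℝ) 1, ∀ ψ : Ω → ℝ, Measurable ψ →
      (∀ ω, ψ ω ∈ Set.Icc (0 : ℝ) 1) →
      (∫ ω, ψ ω ∂Pm) ≤ x → (∫ ω, ψ ω ∂Pp) ≤ ROC x := by
  intro x hx ψ hψ hψ01 hψx
  have hLint : Integrable L Pm :=
    .of_integral_ne_zero (by rw [← setIntegral_univ, ← hRN univ .univ]; simp)
  have hc : 0 ≤ q (1 - x) := by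
    simpa only [hq, hHm, measureReal_def] using sInf_setOf_le_measureReal_nonneg hLpos (sub_pos.2 hx.2)
  set c := q (1 - x)
  have hcompl : {ω | c < L ω} = {ω | L ω ≤ c}ᶜ := by ext; simp
  have hPp : ∫ ω in {ω | c < L ω}, L ω ∂Pm = 1 - Hp c := by
    rw [← hRN _ (measurableSet_lt measurable_const hLmeas), hcompl, hHp, ← measureReal_def,
      ← measureReal_def, probReal_compl_eq_one_sub (measurableSet_le hLmeas measurable_const)]
  have hPm : Pm.real {ω | c < L ω} = 1 - Hm c := by
    rw [hcompl, hHm, ← measureReal_def,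
      probReal_compl_eq_one_sub (measurableSet_le hLmeas measurable_const)]
  calc ∫ ω, ψ ω ∂Pp = ∫ ω, L ω * ψ ω ∂Pm :=
        integral_eq_integral_mul_of_measureReal_eq_setIntegral hLint (hLpos.mono fun _ => le_of_lt)
          hRN ψ
    _ ≤ ∫ ω in {ω | c < L ω}, L ω ∂Pm + c * (∫ ω, ψ ω ∂Pm - Pm.real {ω | c < L ω}) :=
        integral_mul_le_setIntegral_add_mul hLint hLmeas hψ.aestronglyMeasurable hψ01 c
    _ ≤ 1 - Hp c + c * (x - (1 - Hm c)) := by rw [hPp, hPm]; gcongr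
    _ = ROC x := by rw [hROC x hx]; ring

/-- Neyman–Pearson optimality of the randomized LR rule: for every
`x ∈ (0,1)` and every measurable randomized classification rule `ψ : Ω → [0,1]`
with `∫ ψ dP₋ ≤ x`, one has `∫ ψ dP₊ ≤ ROC(x)`. -/
theorem roc_neyman_pearson_optimal
    {Ω : Type*} [MeasurableSpace Ω]
    (Pm Pp : Measure Ω) [IsProbabilityMeasure Pm] [IsProbabilityMeasure Pp]
    (hac : Pp ≪ Pm) (hac' : Pm ≪ Pp)
    (L : Ω → ℝ) (hLmeas : Measurable L)
    (hLpos : ∀ᵐ ω ∂Pm, 0 < L ω)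
    (hRN : ∀ s : Set Ω, MeasurableSet s → (Pp s).toReal = ∫ ω in s, L ω ∂Pm)
    (Hm Hp : ℝ → ℝ)
    (hHm : ∀ l, Hm l = (Pm {ω | L ω ≤ l}).toReal)
    (hHp : ∀ l, Hp l = (Pp {ω | L ω ≤ l}).toReal)
    (q : ℝ → ℝ) (hq : ∀ t, q t = sInf {y : ℝ | t ≤ Hm y})
    (ROC : ℝ → ℝ)
    (hROC0 : ROC 0 = 0) (hROC1 : ROC 1 = 1)
    (hROC : ∀ x ∈ Set.Ioo (0 : ℝ) 1,
        ROC x = 1 - Hp (q (1 - x)) + q (1 - x) * (Hm (q (1 - x)) - (1 - x))) :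
    ∀ x ∈ Set.Ioo (0 : ℝ) 1, ∀ ψ : Ω → ℝ, Measurable ψ →
      (∀ ω, ψ ω ∈ Set.Icc (0 : ℝ) 1) →
      (∫ ω, ψ ω ∂Pm) ≤ x → (∫ ω, ψ ω ∂Pp) ≤ ROC x :=
  roc_neyman_pearson_optimal_general Pm Pp L hLmeas hLpos hRN Hm Hp hHm hHp q hq ROC hROC
end
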